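/- arXiv:2009.09955 — 7 statements merged into one kernel-verified Lean document; each statement's English description precedes it below -/
import Mathlib

section
/- Let p be a path, v a vertex, and let w' ≤ w be impact vectors with w'_v = w_v. Then for every a ≥ 0: d_{w+⟨v,a⟩}(p) − d_w(p) ≤ d_{w'+⟨v,a⟩}(p) − d_{w'}(p). (The marginal increase of a capped path length from raising the impact at v is smaller when the remaining impacts are larger.) -/
/-- The capped length of a path `p` under impact vector `x`:
`d_x(p) = min(∑_{v ∈ p} f_v(x_v), T)`. -/
noncomputable def dLen {V : Type*} (f : V → ℝ → ℝ) (T : ℝ) (x : V → ℝ) (p : List V) : ℝ :=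
  min ((p.map (fun v => f v (x v))).sum) T

lemma min_marginal (T a b d : ℝ) (hba : b ≤ a) (hd : 0 ≤ d) :
    min (a + d) T - min a T ≤ min (b + d) T - min b T := by
  simp only [min_def]
  split_ifs <;> linarith

lemma sum_map_sub {V : Type*} (l : List V) (g1 g2 : V → ℝ) :
    (l.map (fun u => g1 u - g2 u)).sum = (l.map g1).sum - (l.map g2).sum := by
  induction l with
  | nil => simp
  | cons h t ih => simp only [List.map_cons, List.sum_cons, ih]; ring

/-- the marginal increase of a capped path length from raising the impact
at `v` by `a` is smaller when the remaining impacts are larger. -/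
theorem stmt0 {V : Type*} [DecidableEq V]
    (f : V → ℝ → ℝ) (T : ℝ) (hT : 0 < T)
    (hf : ∀ v, MonotoneOn (f v) (Set.Ici 0))
    (hf0 : ∀ v y, 0 ≤ y → 0 ≤ f v y)
    (p : List V) (hp : p.Nodup)
    (v : V) (w w' : V → ℝ)
    (hw' : ∀ u, 0 ≤ w' u) (hw : ∀ u, 0 ≤ w u)
    (hle : ∀ u, w' u ≤ w u) (hv : w' v = w v)
    (a : ℝ) (ha : 0 ≤ a) :
    dLen f T (w + Pi.single v a) p - dLen f T w p ≤
      dLen f T (w' + Pi.single v a) p - dLen f T w' p := by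
  classical
  set s : V → ℝ := Pi.single v a with hs
  set D : ℝ := (p.map (fun u => f u (w u + s u) - f u (w u))).sum with hD
  have hsingle : ∀ u, 0 ≤ s u := by
    intro u
    rw [hs, Pi.single_apply]
    split <;> simp [ha]
  have hpt : ∀ u, f u (w u + s u) - f u (w u)
      = f u (w' u + s u) - f u (w' u) := by
    intro u
    by_cases h : u = v
    · subst h; rw [hv]
    · rw [hs, Pi.single_apply, if_neg h]; simp
  have hDw : (p.map (fun u => f u (w u + s u))).sum
      = (p.map (fun u => f u (w u))).sum + D := by
    rw [hD, sum_map_sub p (fun u => f u (w u + s u)) (fun u => f u (w u))]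
    ring
  have hDw' : (p.map (fun u => f u (w' u + s u))).sum
      = (p.map (fun u => f u (w' u))).sum + D := by
    have : D = (p.map (fun u => f u (w' u + s u) - f u (w' u))).sum := by
      rw [hD]
      exact congrArg List.sum (List.map_congr_left (fun u _ => hpt u))
    rw [this, sum_map_sub p (fun u => f u (w' u + s u)) (fun u => f u (w' u))]
    ring
  have hDnn : 0 ≤ D := by
    rw [hD]
    apply List.sum_nonneg
    intro x hx
    simp only [List.mem_map] at hx
    obtain ⟨u, _, rfl⟩ := hx
    have h1 := hsingle u
    have h2 := hw u
    have hmono : f u (w u) ≤ f u (w u + s u) :=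
      hf u (Set.mem_Ici.mpr h2)
        (Set.mem_Ici.mpr (by linarith : (0:ℝ) ≤ w u + s u))
        (le_add_of_nonneg_right h1)
    linarith
  have hsums : (p.map (fun u => f u (w' u))).sum ≤ (p.map (fun u => f u (w u))).sum := by
    apply List.sum_le_sum
    intro u _
    exact hf u (Set.mem_Ici.mpr (hw' u)) (Set.mem_Ici.mpr (hw u)) (hle u)
  have e1 : dLen f T (w + s) p
      = min ((p.map (fun u => f u (w u))).sum + D) T := by
    unfold dLen
    rw [show (p.map (fun u => f u ((w + s) u))).sum
        = (p.map (fun u => f u (w u + s u))).sum from rfl, hDw]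
  have e1' : dLen f T (w' + s) p
      = min ((p.map (fun u => f u (w' u))).sum + D) T := by
    unfold dLen
    rw [show (p.map (fun u => f u ((w' + s) u))).sum
        = (p.map (fun u => f u (w' u + s u))).sum from rfl, hDw']
  rw [e1, e1']
  show _ - min _ T ≤ _ - min _ T
  exact min_marginal T _ _ D hsums hDnn
end

section
/- Let P ⊆ P' be finite sets of paths, v a vertex, and let w' ≤ w be impact vectors with w'_v = w_v. Then for every a ≥ 0: r_{P,w,v}(a) ≤ r_{P',w',v}(a). -/
/-- `r_{P,w,v}(a) = ∑_{p∈P} (d_{w+⟨v,a⟩}(p) − d_w(p))`. -/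
noncomputable def rGain {V : Type*} [DecidableEq V] (f : V → ℝ → ℝ) (T : ℝ)
    (P : Finset (List V)) (w : V → ℝ) (v : V) (a : ℝ) : ℝ :=
  ∑ p ∈ P, (dLen f T (w + Pi.single v a) p - dLen f T w p)

private lemma sum_perturb {V : Type*} [DecidableEq V] (f : V → ℝ → ℝ) (v : V) (a : ℝ)
    (x : V → ℝ) : ∀ (p : List V), p.Nodup →
    (p.map (fun u => f u ((x + Pi.single v a : V → ℝ) u))).sum =
      (p.map (fun u => f u (x u))).sum +
        (if v ∈ p then f v (x v + a) - f v (x v) else 0) := by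
  intro p
  induction p with
  | nil => simp
  | cons u t ih =>
    intro hnd
    rcases List.nodup_cons.1 hnd with ⟨hu, ht⟩
    by_cases huv : u = v
    · have hvt : v ∉ t := huv ▸ hu
      have hmap : List.map (fun b => f b ((x + Pi.single v a : V → ℝ) b)) t
          = List.map (fun b => f b (x b)) t :=
        List.map_congr_left (fun b hb => by
          have hbv : b ≠ v := fun h => hvt (h ▸ hb)
          simp [Pi.single_apply, hbv])
      have hu' : (x + Pi.single v a : V → ℝ) u = x u + a := by
        simp [Pi.single_apply, huv]
      rw [List.map_cons, List.sum_cons, hmap, hu',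
        if_pos (List.mem_cons.2 (Or.inl huv.symm)), huv]
      simp only [List.map_cons, List.sum_cons]
      ring
    · have h1 := ih ht
      simp only [List.map_cons, List.sum_cons, h1, List.mem_cons]
      have hxx : (x + Pi.single v a : V → ℝ) u = x u := by
        simp [Pi.add_apply, Pi.single_apply, huv]
      rw [hxx]
      have hvm : (v = u ∨ v ∈ t) ↔ v ∈ t := or_iff_right (fun h => huv h.symm)
      simp only [hvm]
      ring

private lemma min_gain_nonneg {s δ T : ℝ} (hδ : 0 ≤ δ) :
    0 ≤ min (s + δ) T - min s T := by
  have : min s T ≤ min (s + δ) T := min_le_min (by linarith) le_rfl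
  linarith

private lemma min_gain_mono {s₁ s₂ δ T : ℝ} (h : s₁ ≤ s₂) (hδ : 0 ≤ δ) :
    min (s₂ + δ) T - min s₂ T ≤ min (s₁ + δ) T - min s₁ T := by
  simp only [min_def]
  split_ifs <;> linarith

/-- for `P ⊆ P'`, `w' ≤ w` with `w'_v = w_v`, and `a ≥ 0`:
`r_{P,w,v}(a) ≤ r_{P',w',v}(a)`. -/
theorem stmt1 {V : Type*} [DecidableEq V]
    (f : V → ℝ → ℝ) (T : ℝ) (hT : 0 < T)
    (hf : ∀ v, MonotoneOn (f v) (Set.Ici 0))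
    (hf0 : ∀ v y, 0 ≤ y → 0 ≤ f v y)
    (P P' : Finset (List V)) (hPP : P ⊆ P') (hP' : ∀ p ∈ P', p.Nodup)
    (v : V) (w w' : V → ℝ)
    (hw' : ∀ u, 0 ≤ w' u) (hw : ∀ u, 0 ≤ w u)
    (hle : ∀ u, w' u ≤ w u) (hv : w' v = w v)
    (a : ℝ) (ha : 0 ≤ a) :
    rGain f T P w v a ≤ rGain f T P' w' v a := by
  have hδ' : 0 ≤ f v (w' v + a) - f v (w' v) := by
    have := hf v (show w' v ∈ Set.Ici (0:ℝ) from hw' v)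
      (show w' v + a ∈ Set.Ici (0:ℝ) from by simp only [Set.mem_Ici]; linarith [hw' v])
      (le_add_of_nonneg_right ha)
    linarith
  have hδw : 0 ≤ f v (w v + a) - f v (w v) := by rw [← hv]; exact hδ'
  -- per-path gains
  have key : ∀ p ∈ P', (dLen f T (w + Pi.single v a) p - dLen f T w p)
      ≤ (dLen f T (w' + Pi.single v a) p - dLen f T w' p) := by
    intro p hp
    have hnd := hP' p hp
    unfold dLen
    rw [sum_perturb f v a w p hnd, sum_perturb f v a w' p hnd, hv]
    set δ : ℝ := if v ∈ p then f v (w v + a) - f v (w v) else 0 with hδdef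
    have hδ : 0 ≤ δ := by
      rw [hδdef]; split_ifs with h; exacts [hδw, le_rfl]
    exact min_gain_mono (List.sum_le_sum (fun u hu =>
      hf u (Set.mem_Ici.2 (hw' u)) (Set.mem_Ici.2 (hw u)) (hle u))) hδ
  have nonneg : ∀ p ∈ P', p ∉ P →
      0 ≤ dLen f T (w' + Pi.single v a) p - dLen f T w' p := by
    intro p hp _
    have hnd := hP' p hp
    unfold dLen
    rw [sum_perturb f v a w' p hnd]
    apply min_gain_nonneg
    split_ifs with h; exacts [hδ', le_rfl]
  unfold rGain
  refine le_trans (Finset.sum_le_sum fun p hp => key p (hPP hp)) ?_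
  exact Finset.sum_le_sum_of_subset_of_nonneg hPP nonneg
end

section
/- (Coordinatewise subadditivity of the total length increase.) Let P be a finite set of paths and let w and t be impact vectors. Then ∑_{p∈P} (d_{w+t}(p) − d_w(p)) ≤ ∑_{u∈V} r_{P,w,u}(t_u). -/
lemma min_sub_lem {V : Type*} [Fintype V] (S T : ℝ) (δ : V → ℝ) (hδ : ∀ u, 0 ≤ δ u) :
    min (S + ∑ u : V, δ u) T - min S T ≤ ∑ u : V, (min (S + δ u) T - min S T) := by
  rcases le_or_gt T S with h | h
  · have hsum : 0 ≤ ∑ u : V, δ u := Finset.sum_nonneg fun u _ => hδ u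
    have h1 : min S T = T := min_eq_right h
    have h2 : min (S + ∑ u : V, δ u) T = T := min_eq_right (by linarith)
    have h3 : ∀ u : V, min (S + δ u) T = T := fun u => min_eq_right (by linarith [hδ u])
    simp [h1, h2, h3]
  · have h1 : min S T = S := min_eq_left h.le
    rw [h1]
    by_cases hc : ∃ u : V, T ≤ S + δ u
    · obtain ⟨u, hu⟩ := hc
      have step : min (S + ∑ v : V, δ v) T - S ≤ min (S + δ u) T - S := by
        rw [min_eq_right hu]
        have := min_le_right (S + ∑ v : V, δ v) T
        linarith
      refine step.trans ?_
      refine Finset.single_le_sum (f := fun v => min (S + δ v) T - S) ?_ (Finset.mem_univ u)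
      intro v _
      have : S ≤ min (S + δ v) T := le_min (by linarith [hδ v]) h.le
      show (0:ℝ) ≤ min (S + δ v) T - S
      linarith
    · push_neg at hc
      have h3 : ∀ u : V, min (S + δ u) T = S + δ u := fun u => min_eq_left (hc u).le
      simp only [h3]
      have hmin := min_le_left (S + ∑ u : V, δ u) T
      calc min (S + ∑ u : V, δ u) T - S ≤ ∑ u : V, δ u := by linarith
        _ = ∑ u : V, (S + δ u - S) := by simp

/-- coordinatewise subadditivity of the total length increase:
`∑_{p∈P} (d_{w+t}(p) − d_w(p)) ≤ ∑_{u∈V} r_{P,w,u}(t_u)`. -/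
theorem stmt2 {V : Type*} [Fintype V] [DecidableEq V]
    (f : V → ℝ → ℝ) (T : ℝ) (hT : 0 < T)
    (hf : ∀ v, MonotoneOn (f v) (Set.Ici 0))
    (hf0 : ∀ v y, 0 ≤ y → 0 ≤ f v y)
    (P : Finset (List V)) (hP : ∀ p ∈ P, p.Nodup)
    (w t : V → ℝ) (hw : ∀ u, 0 ≤ w u) (ht : ∀ u, 0 ≤ t u) :
    ∑ p ∈ P, (dLen f T (w + t) p - dLen f T w p) ≤ ∑ u : V, rGain f T P w u (t u) := by
  unfold rGain
  rw [Finset.sum_comm]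
  refine Finset.sum_le_sum fun p hp => ?_
  have hdup := hP p hp
  set δ : V → ℝ := fun u => if u ∈ p then f u (w u + t u) - f u (w u) else 0 with hδdef
  have hδ : ∀ u, 0 ≤ δ u := by
    intro u
    show (0:ℝ) ≤ if u ∈ p then f u (w u + t u) - f u (w u) else 0
    split
    · have hmono : f u (w u) ≤ f u (w u + t u) :=
        hf u (Set.mem_Ici.2 (hw u)) (Set.mem_Ici.2 (by linarith [hw u, ht u]))
          (by linarith [ht u])
      linarith
    · exact le_refl 0
  have hto : ∀ g : V → ℝ, (p.map g).sum = ∑ v ∈ p.toFinset, g v :=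
    fun g => (List.sum_toFinset g hdup).symm
  set S : ℝ := (p.map (fun v => f v (w v))).sum with hS
  have hSfin : S = ∑ v ∈ p.toFinset, f v (w v) := hto _
  have hsumδ : ∑ v ∈ p.toFinset, δ v = ∑ u : V, δ u := by
    refine Finset.sum_subset (Finset.subset_univ _) ?_
    intro u _ hu
    simp only [hδdef]
    rw [if_neg (by simpa using hu)]
  have hsum1 : (p.map (fun v => f v (w v + t v))).sum = S + ∑ u : V, δ u := by
    rw [hto, hSfin, ← hsumδ, ← Finset.sum_add_distrib]
    refine Finset.sum_congr rfl fun v hv => ?_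
    simp only [hδdef, Pi.add_apply]
    rw [if_pos (List.mem_toFinset.mp hv)]
    ring
  have hsum2 : ∀ u : V,
      (p.map (fun v => f v (w v + (Pi.single u (t u) : V → ℝ) v))).sum = S + δ u := by
    intro u
    rw [hto, hSfin]
    have hpt : ∀ v ∈ p.toFinset,
        f v (w v + (Pi.single u (t u) : V → ℝ) v) = f v (w v) + (if v = u then δ v else 0) := by
      intro v hv
      by_cases hvu : v = u
      · subst hvu
        simp only [Pi.add_apply, Pi.single_eq_same, if_pos rfl, hδdef]
        rw [if_pos (List.mem_toFinset.mp hv)]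
        simp only [if_true]
        ring
      · simp [Pi.add_apply, Pi.single_eq_of_ne hvu, hvu]
    rw [Finset.sum_congr rfl hpt, Finset.sum_add_distrib]
    congr 1
    rw [Finset.sum_ite_eq' p.toFinset u δ]
    by_cases hu : u ∈ p.toFinset
    · rw [if_pos hu]
    · rw [if_neg hu]
      simp only [hδdef]
      rw [if_neg (by simpa using hu)]
  unfold dLen
  simp only [Pi.add_apply]
  rw [hsum1]
  have := min_sub_lem S T δ hδ
  rw [← hS] at *
  calc min (S + ∑ u : V, δ u) T - min S T
      ≤ ∑ u : V, (min (S + δ u) T - min S T) := this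
    _ = ∑ u : V, (min ((p.map (fun v => f v (w v + (Pi.single u (t u) : V → ℝ) v))).sum) T - min S T) := by
        refine Finset.sum_congr rfl fun u _ => ?_
        rw [hsum2 u]
end

section
/- (Core of Lemma 2: maximality of the selected amount propagates.) Let P ⊆ P' be finite sets of paths, v a vertex, M' > 0 and x̂ ≥ 0. Let w' and w be impact vectors with w ≥ w' + ⟨v,x̂⟩ and w_v = w'_v + x̂. Suppose r_{P',w',v}(x̂) ≥ M'·x̂ and r_{P',w',v}(y) < M'·y for every y > x̂ (i.e., x̂ is the maximum amount y with r_{P',w',v}(y)/y ≥ M'). Then for every a > 0: r_{P,w,v}(a) < M'·a. -/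
lemma min_diff_le (A B C D T : ℝ) (hAC : A ≤ C) (hAB : A ≤ B) (hsum : D + A = B + C) :
    min D T - min C T ≤ min B T - min A T := by
  rcases le_total A T with h1 | h1 <;> rcases le_total B T with h2 | h2 <;>
    rcases le_total C T with h3 | h3 <;> rcases le_total D T with h4 | h4 <;>
    simp [min_eq_left, min_eq_right, h1, h2, h3, h4] <;> linarith

lemma sum_map_add {V : Type*} (l : List V) (g h : V → ℝ) :
    (l.map (fun u => g u + h u)).sum = (l.map g).sum + (l.map h).sum := by
  induction l with
  | nil => simp
  | cons x xs ih => simp [ih]; ring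

/-- core of Lemma 2: maximality of the selected amount propagates.
If `x̂` is the maximum amount `y` with `r_{P',w',v}(y)/y ≥ M'`, then after adding
`x̂` at `v` (and possibly more elsewhere), `r_{P,w,v}(a) < M'·a` for every `a > 0`. -/
theorem stmt4 {V : Type*} [DecidableEq V]
    (f : V → ℝ → ℝ) (T : ℝ) (hT : 0 < T)
    (hf : ∀ v, MonotoneOn (f v) (Set.Ici 0))
    (hf0 : ∀ v y, 0 ≤ y → 0 ≤ f v y)
    (P P' : Finset (List V)) (hPP : P ⊆ P') (hP' : ∀ p ∈ P', p.Nodup)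
    (v : V) (M' : ℝ) (hM' : 0 < M')
    (xhat : ℝ) (hxhat : 0 ≤ xhat)
    (w w' : V → ℝ)
    (hw' : ∀ u, 0 ≤ w' u)
    (hwge : ∀ u, ((w' + Pi.single v xhat : V → ℝ)) u ≤ w u)
    (hwv : w v = w' v + xhat)
    (hsel : M' * xhat ≤ rGain f T P' w' v xhat)
    (hmax : ∀ y : ℝ, xhat < y → rGain f T P' w' v y < M' * y) :
    ∀ a : ℝ, 0 < a → rGain f T P w v a < M' * a := by
  intro a ha
  set wA : V → ℝ := w' + Pi.single v xhat with hwA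
  set wB : V → ℝ := w' + Pi.single v (xhat + a) with hwB
  set wD : V → ℝ := w + Pi.single v a with hwD
  have hwA0 : ∀ u, 0 ≤ wA u := by
    intro u
    by_cases hu : u = v
    · subst hu; simp [hwA]; have := hw' u; linarith
    · simp [hwA, Pi.single_eq_of_ne hu, hw' u]
  have hw0 : ∀ u, 0 ≤ w u := fun u => (hwA0 u).trans (hwge u)
  have hwB0 : ∀ u, 0 ≤ wB u := by
    intro u
    by_cases hu : u = v
    · subst hu; simp [hwB]; have := hw' u; linarith
    · simp [hwB, Pi.single_eq_of_ne hu, hw' u]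
  have hwD0 : ∀ u, 0 ≤ wD u := by
    intro u
    by_cases hu : u = v
    · subst hu; simp [hwD]; have := hw0 u; linarith
    · simp [hwD, Pi.single_eq_of_ne hu, hw0 u]
  -- pointwise facts
  have hAC : ∀ u, f u (wA u) ≤ f u (w u) :=
    fun u => (hf u) (hwA0 u) (hw0 u) (hwge u)
  have hAB : ∀ u, f u (wA u) ≤ f u (wB u) := by
    intro u
    apply (hf u) (hwA0 u) (hwB0 u)
    by_cases hu : u = v
    · subst hu; simp [hwA, hwB]; linarith
    · simp [hwA, hwB, Pi.single_eq_of_ne hu]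
  have hpt : ∀ u, f u (wD u) + f u (wA u) = f u (wB u) + f u (w u) := by
    intro u
    by_cases hu : u = v
    · subst hu
      simp [hwA, hwB, hwD, hwv]
      ring_nf
    · simp [hwA, hwB, hwD, Pi.single_eq_of_ne hu]
      ring
  -- per-path inequality
  have key : ∀ p ∈ P', dLen f T wD p - dLen f T w p ≤ dLen f T wB p - dLen f T wA p := by
    intro p _
    unfold dLen
    apply min_diff_le
    · exact List.sum_le_sum (fun u _ => hAC u)
    · exact List.sum_le_sum (fun u _ => hAB u)
    · rw [← sum_map_add, ← sum_map_add]
      exact congrArg List.sum (List.map_congr_left (fun u _ => hpt u))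
  have key2 : ∀ p ∈ P', 0 ≤ dLen f T wB p - dLen f T wA p := by
    intro p _
    have : dLen f T wA p ≤ dLen f T wB p := by
      unfold dLen
      exact min_le_min (List.sum_le_sum (fun u _ => hAB u)) le_rfl
    linarith
  have hsum : rGain f T P w v a ≤ rGain f T P' w' v (xhat + a) - rGain f T P' w' v xhat := by
    unfold rGain
    rw [← Finset.sum_sub_distrib]
    calc ∑ p ∈ P, (dLen f T wD p - dLen f T w p)
        ≤ ∑ p ∈ P, (dLen f T wB p - dLen f T wA p) :=
          Finset.sum_le_sum (fun p hp => key p (hPP hp))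
      _ ≤ ∑ p ∈ P', (dLen f T wB p - dLen f T wA p) :=
          Finset.sum_le_sum_of_subset_of_nonneg hPP (fun p hp _ => key2 p hp)
      _ = ∑ p ∈ P', (dLen f T wB p - dLen f T w' p - (dLen f T wA p - dLen f T w' p)) := by
          apply Finset.sum_congr rfl; intro p _; ring
  have hlt := hmax (xhat + a) (by linarith)
  nlinarith [hsum, hlt, hsel]
end

section
/- (One-step potential bound used in the proof of Theorem 2.) Let P be a finite set of paths, x, s, s* impact vectors with d_{x+s*}(p) ≥ T for all p ∈ P, and set s° = s* \ s. Let ϵ ∈ [0,1), v a vertex and x̂ > 0, and suppose that for every vertex u with s°_u > 0: r_{P,x+s,v}(x̂)/x̂ ≥ (1−ϵ) · r_{P,x+s,u}(s°_u)/s°_u. Then ∑_{p∈P} (T − d_{x+s}(p)) ≤ (‖s*‖ / (x̂(1−ϵ))) · r_{P,x+s,v}(x̂). -/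
noncomputable def pathWeight {V : Type*} (f : V → ℝ → ℝ) (x : V → ℝ) (p : List V) : ℝ :=
  (p.map fun v => f v (x v)).sum

section PathWeight

variable {V : Type*} (f : V → ℝ → ℝ)

theorem dLen_eq_min_pathWeight (T : ℝ) (x : V → ℝ) (p : List V) :
    dLen f T x p = min (pathWeight f x p) T := rfl

theorem pathWeight_mono {f} (hf : ∀ v, MonotoneOn (f v) (Set.Ici 0)) {x y : V → ℝ}
    (hx : ∀ u, 0 ≤ x u) (hxy : ∀ u, x u ≤ y u) (p : List V) :
    pathWeight f x p ≤ pathWeight f y p :=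
  List.sum_le_sum fun v _ => hf v (hx v) ((hx v).trans (hxy v)) (hxy v)

theorem dLen_mono {f} (hf : ∀ v, MonotoneOn (f v) (Set.Ici 0)) (T : ℝ) {x y : V → ℝ}
    (hx : ∀ u, 0 ≤ x u) (hxy : ∀ u, x u ≤ y u) (p : List V) :
    dLen f T x p ≤ dLen f T y p :=
  min_le_min_right T (pathWeight_mono hf hx hxy p)

theorem pathWeight_add_sub_eq_sum_single [Fintype V] [DecidableEq V] (w δ : V → ℝ) (p : List V) :
    pathWeight f (w + δ) p - pathWeight f w p =
      ∑ u, (pathWeight f (w + Pi.single u (δ u)) p - pathWeight f w p) := by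
  induction p with
  | nil => simp [pathWeight]
  | cons a l ih =>
    have hhead : ∑ u, (f a ((w + Pi.single u (δ u) : V → ℝ) a) - f a (w a)) =
        f a (w a + δ a) - f a (w a) := by
      rw [Finset.sum_eq_single a (fun u _ hu => by simp [hu.symm]) (by simp)]
      simp
    simp only [pathWeight, List.map_cons, List.sum_cons, add_sub_add_comm] at ih ⊢
    rw [ih, Finset.sum_add_distrib, hhead, Pi.add_apply]

end PathWeight

theorem min_add_sum_sub_min_le {ι : Type*} (A T : ℝ) (s : Finset ι) {b : ι → ℝ}
    (hb : ∀ i ∈ s, 0 ≤ b i) :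
    min (A + ∑ i ∈ s, b i) T - min A T ≤ ∑ i ∈ s, (min (A + b i) T - min A T) :=
  Finset.le_sum_of_subadditive_on_pred (fun a => min (A + a) T - min A T) (0 ≤ ·)
    (by simp) (fun a b ha hb => by simp only [min_def]; split_ifs <;> linarith)
    (fun _ _ => add_nonneg) b hb

section Gain

variable {V : Type*} [DecidableEq V] {f : V → ℝ → ℝ} (T : ℝ)

theorem rGain_zero (P : Finset (List V)) (w : V → ℝ) (v : V) : rGain f T P w v 0 = 0 := by
  simp [rGain]

theorem rGain_nonneg (hf : ∀ v, MonotoneOn (f v) (Set.Ici 0)) (P : Finset (List V)) {w : V → ℝ}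
    (hw : ∀ u, 0 ≤ w u) (v : V) {a : ℝ} (ha : 0 ≤ a) : 0 ≤ rGain f T P w v a :=
  Finset.sum_nonneg fun p _ => sub_nonneg.2 <| dLen_mono hf T hw (fun u => le_add_of_nonneg_right
    (by rw [Pi.single_apply]; split_ifs; exacts [ha, le_rfl])) p

variable [Fintype V]

theorem sub_dLen_le_sum_single (hf : ∀ v, MonotoneOn (f v) (Set.Ici 0)) {w σ : V → ℝ}
    (hw : ∀ u, 0 ≤ w u) (hσ : ∀ u, 0 ≤ σ u) {p : List V} (hreach : T ≤ dLen f T (w + σ) p) :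
    T - dLen f T w p ≤ ∑ u, (dLen f T (w + Pi.single u (σ u)) p - dLen f T w p) := by
  set A := pathWeight f w p
  set b : V → ℝ := fun u => pathWeight f (w + Pi.single u (σ u)) p - A
  have hb : ∀ u ∈ Finset.univ, 0 ≤ b u := fun u _ =>
    sub_nonneg.2 (pathWeight_mono hf hw (fun v => le_add_of_nonneg_right
      (by rw [Pi.single_apply]; split_ifs with h; exacts [h ▸ hσ u, le_rfl])) p)
  have hsingle : ∀ u, dLen f T (w + Pi.single u (σ u)) p = min (A + b u) T := fun u => by
    simp [b, dLen_eq_min_pathWeight]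
  have hfull : dLen f T (w + σ) p = min (A + ∑ u, b u) T := by
    rw [dLen_eq_min_pathWeight, ← pathWeight_add_sub_eq_sum_single, add_sub_cancel]
  have hcapped : min (A + ∑ u, b u) T = T := le_antisymm (min_le_right _ _) (hfull ▸ hreach)
  have hbase : dLen f T w p = min A T := rfl
  simpa only [hbase, hsingle, hcapped] using min_add_sum_sub_min_le A T Finset.univ hb

theorem sum_sub_dLen_le_sum_rGain (hf : ∀ v, MonotoneOn (f v) (Set.Ici 0)) {w σ : V → ℝ}
    (hw : ∀ u, 0 ≤ w u) (hσ : ∀ u, 0 ≤ σ u) {P : Finset (List V)}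
    (hreach : ∀ p ∈ P, T ≤ dLen f T (w + σ) p) :
    ∑ p ∈ P, (T - dLen f T w p) ≤ ∑ u, rGain f T P w u (σ u) :=
  calc ∑ p ∈ P, (T - dLen f T w p)
      ≤ ∑ p ∈ P, ∑ u, (dLen f T (w + Pi.single u (σ u)) p - dLen f T w p) :=
        Finset.sum_le_sum fun p hp => by exact sub_dLen_le_sum_single T hf hw hσ (hreach p hp)
    _ = ∑ u, rGain f T P w u (σ u) := by simp only [rGain]; exact Finset.sum_comm

end Gain

theorem le_mul_div_mul_of_mul_div_le {r R a c k : ℝ} (ha : 0 < a) (hk : 0 < k)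
    (h : k * (r / a) ≤ R / c) : r ≤ a * (R / (c * k)) := by
  have hratio : r / a ≤ R / (c * k) := by
    rw [← div_div, le_div_iff₀ hk, mul_comm]
    exact h
  exact (div_le_iff₀' ha).1 hratio

theorem stmt5_general {V : Type*} [Fintype V] [DecidableEq V]
    (f : V → ℝ → ℝ) (T : ℝ)
    (hf : ∀ v, MonotoneOn (f v) (Set.Ici 0))
    (P : Finset (List V))
    (x s sStar : V → ℝ)
    (hx : ∀ u, 0 ≤ x u) (hs : ∀ u, 0 ≤ s u) (hsStar : ∀ u, 0 ≤ sStar u)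
    (hopt : ∀ p ∈ P, T ≤ dLen f T (x + sStar) p)
    (sCirc : V → ℝ) (hsCirc : ∀ u, sCirc u = max (sStar u - s u) 0)
    (ϵ : ℝ) (hϵ1 : ϵ < 1)
    (v : V) (xhat : ℝ) (hxhat : 0 < xhat)
    (hgreedy : ∀ u, 0 < sCirc u →
      (1 - ϵ) * (rGain f T P (x + s) u (sCirc u) / sCirc u)
        ≤ rGain f T P (x + s) v xhat / xhat) :
    ∑ p ∈ P, (T - dLen f T (x + s) p) ≤
      ((∑ u : V, sStar u) / (xhat * (1 - ϵ))) * rGain f T P (x + s) v xhat := by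
  set K := rGain f T P (x + s) v xhat / (xhat * (1 - ϵ))
  have hw : ∀ u, 0 ≤ (x + s) u := fun u => add_nonneg (hx u) (hs u)
  have hσ : ∀ u, 0 ≤ sCirc u := fun u => (hsCirc u).symm ▸ le_max_right _ _
  have hσle : ∀ u, sCirc u ≤ sStar u := fun u =>
    (hsCirc u).symm ▸ max_le (by linarith [hs u]) (hsStar u)
  have hreach : ∀ p ∈ P, T ≤ dLen f T (x + s + sCirc) p := fun p hp =>
    (hopt p hp).trans <| dLen_mono hf T (fun u => add_nonneg (hx u) (hsStar u)) (fun u => by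
      simp only [Pi.add_apply, hsCirc]; linarith [le_max_left (sStar u - s u) 0]) p
  have hK : 0 ≤ K :=
    div_nonneg (rGain_nonneg T hf P hw v hxhat.le) (mul_pos hxhat (sub_pos.2 hϵ1)).le
  have hvertex : ∀ u, rGain f T P (x + s) u (sCirc u) ≤ sCirc u * K := fun u => by
    rcases (hσ u).eq_or_lt with h | h
    · rw [← h, rGain_zero, zero_mul]
    · exact le_mul_div_mul_of_mul_div_le h (sub_pos.2 hϵ1) (hgreedy u h)
  calc ∑ p ∈ P, (T - dLen f T (x + s) p)
      ≤ ∑ u, rGain f T P (x + s) u (sCirc u) := sum_sub_dLen_le_sum_rGain T hf hw hσ hreach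
    _ ≤ ∑ u, sStar u * K := Finset.sum_le_sum fun u _ =>
        (hvertex u).trans (mul_le_mul_of_nonneg_right (hσle u) hK)
    _ = (∑ u, sStar u) / (xhat * (1 - ϵ)) * rGain f T P (x + s) v xhat := by
        rw [← Finset.sum_mul]; ring

/-- one-step potential bound used in the proof of Theorem 2. -/
theorem stmt5 {V : Type*} [Fintype V] [DecidableEq V]
    (f : V → ℝ → ℝ) (T : ℝ) (hT : 0 < T)
    (hf : ∀ v, MonotoneOn (f v) (Set.Ici 0))
    (hf0 : ∀ v y, 0 ≤ y → 0 ≤ f v y)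
    (P : Finset (List V)) (hP : ∀ p ∈ P, p.Nodup)
    (x s sStar : V → ℝ)
    (hx : ∀ u, 0 ≤ x u) (hs : ∀ u, 0 ≤ s u) (hsStar : ∀ u, 0 ≤ sStar u)
    (hopt : ∀ p ∈ P, T ≤ dLen f T (x + sStar) p)
    (sCirc : V → ℝ) (hsCirc : ∀ u, sCirc u = max (sStar u - s u) 0)
    (ϵ : ℝ) (hϵ0 : 0 ≤ ϵ) (hϵ1 : ϵ < 1)
    (v : V) (xhat : ℝ) (hxhat : 0 < xhat)
    (hgreedy : ∀ u, 0 < sCirc u →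
      (1 - ϵ) * (rGain f T P (x + s) u (sCirc u) / sCirc u)
        ≤ rGain f T P (x + s) v xhat / xhat) :
    ∑ p ∈ P, (T - dLen f T (x + s) p) ≤
      ((∑ u : V, sStar u) / (xhat * (1 - ϵ))) * rGain f T P (x + s) v xhat :=
  stmt5_general f T hf P x s sStar hx hs hsStar hopt sCirc hsCirc ϵ hϵ1 v xhat hxhat hgreedy
end

section
/- (One-step potential bound used in the proof of Theorem 3, with jump-start parameter β.) Let P be a finite set of paths, x, s, s* impact vectors with d_{x+s*}(p) ≥ T for all p ∈ P, let β ≥ 0 and n = |V|. Let v be a vertex and x̂ > 0, and suppose that for every vertex u and every a ≥ β with a > 0: r_{P,x+s,v}(x̂)/x̂ ≥ r_{P,x+s,u}(a)/a. Then ∑_{p∈P} (T − d_{x+s}(p)) ≤ ((‖s*‖ + β·n)/x̂) · r_{P,x+s,v}(x̂). -/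
lemma core_min {V : Type*} (F : Finset V) (δ : V → ℝ) (hδ : ∀ u ∈ F, 0 ≤ δ u)
    (S T : ℝ) (h : T ≤ S + ∑ u ∈ F, δ u) :
    T - min S T ≤ ∑ u ∈ F, (min (S + δ u) T - min S T) := by
  rcases le_or_gt T S with hTS | hTS
  · rw [min_eq_right hTS]
    have h2 : (0:ℝ) ≤ ∑ u ∈ F, (min (S + δ u) T - T) := by
      apply Finset.sum_nonneg
      intro u hu
      have : T ≤ min (S + δ u) T := le_min (by linarith [hδ u hu]) le_rfl
      linarith
    linarith
  · rw [min_eq_left hTS.le]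
    set c := T - S with hc
    have hc0 : 0 < c := by simp only [hc]; linarith
    have hterm : ∀ u ∈ F, min (S + δ u) T - S = min (δ u) c := by
      intro u hu
      rcases le_total (δ u) c with h' | h'
      · rw [min_eq_left h', min_eq_left (by simp only [hc] at h' ⊢; linarith)]
        try ring
      · rw [min_eq_right h', min_eq_right (by simp only [hc] at h' ⊢; linarith)]
        try simp [hc]
    rw [Finset.sum_congr rfl hterm]
    by_cases hex : ∃ u ∈ F, c ≤ δ u
    · obtain ⟨u, hu, hcu⟩ := hex
      have h3 : min (δ u) c ≤ ∑ t ∈ F, min (δ t) c :=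
        Finset.single_le_sum (fun t ht => le_min (hδ t ht) hc0.le) hu
      rw [min_eq_right hcu] at h3
      linarith
    · push_neg at hex
      have h4 : ∑ u ∈ F, min (δ u) c = ∑ u ∈ F, δ u :=
        Finset.sum_congr rfl (fun u hu => min_eq_left (hex u hu).le)
      rw [h4]; linarith

set_option maxHeartbeats 1000000 in
/-- one-step potential bound used in the proof of Theorem 3,
with jump-start parameter `β`. -/

theorem stmt9 {V : Type*} [Fintype V] [DecidableEq V]
    (f : V → ℝ → ℝ) (T : ℝ) (hT : 0 < T)
    (hf : ∀ v, MonotoneOn (f v) (Set.Ici 0))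
    (hf0 : ∀ v y, 0 ≤ y → 0 ≤ f v y)
    (P : Finset (List V)) (hP : ∀ p ∈ P, p.Nodup)
    (x s sStar : V → ℝ)
    (hx : ∀ u, 0 ≤ x u) (hs : ∀ u, 0 ≤ s u) (hsStar : ∀ u, 0 ≤ sStar u)
    (hopt : ∀ p ∈ P, T ≤ dLen f T (x + sStar) p)
    (β : ℝ) (hβ : 0 ≤ β)
    (v : V) (xhat : ℝ) (hxhat : 0 < xhat)
    (hgreedy : ∀ u, ∀ a : ℝ, β ≤ a → 0 < a →
      rGain f T P (x + s) u a / a ≤ rGain f T P (x + s) v xhat / xhat) :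
    ∑ p ∈ P, (T - dLen f T (x + s) p) ≤
      (((∑ u : V, sStar u) + β * (Fintype.card V : ℝ)) / xhat) *
        rGain f T P (x + s) v xhat := by
  obtain ⟨w, hw⟩ : ∃ w : V → ℝ, x + s = w := ⟨_, rfl⟩
  rw [hw] at hgreedy ⊢
  obtain ⟨a, ha⟩ : ∃ a : V → ℝ, a = fun u => sStar u + β := ⟨_, rfl⟩
  have ha' : ∀ u, a u = sStar u + β := fun u => by rw [ha]
  have hw' : ∀ t, w t = x t + s t := fun t => by rw [← hw]; rfl
  have hwnn : ∀ t, 0 ≤ w t := fun t => by rw [hw']; exact add_nonneg (hx t) (hs t)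
  have hann : ∀ t, 0 ≤ a t := fun t => by rw [ha']; exact add_nonneg (hsStar t) hβ
  -- step 1: per-path bound
  have step1 : ∀ p ∈ P, T - dLen f T w p ≤
      ∑ u : V, (dLen f T (w + Pi.single u (a u)) p - dLen f T w p) := by
    intro p hp
    have hnd := hP p hp
    set F := p.toFinset with hF
    set S := ∑ t ∈ F, f t (w t) with hS
    have hmap : ∀ g : V → ℝ, (p.map g).sum = ∑ t ∈ F, g t := by
      intro g; rw [hF, List.sum_toFinset _ hnd]
    set δ : V → ℝ := fun u => f u (w u + a u) - f u (w u) with hδdef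
    have hδnn : ∀ u, 0 ≤ δ u := by
      intro u
      have := hf u (Set.mem_Ici.mpr (hwnn u))
        (Set.mem_Ici.mpr (add_nonneg (hwnn u) (hann u)))
        (le_add_of_nonneg_right (hann u))
      simp only [hδdef]; linarith
    have hcalc : ∀ u : V,
        (p.map (fun t => f t (((w + Pi.single u (a u) : V → ℝ)) t))).sum
          = S + (if u ∈ F then δ u else 0) := by
      intro u
      rw [hmap]
      have hcg : ∀ t ∈ F, f t (((w + Pi.single u (a u) : V → ℝ)) t)
          = f t (w t) + (if t = u then δ t else 0) := by
        intro t ht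
        by_cases htu : t = u
        · subst htu
          simp [Pi.add_apply, Pi.single_eq_same, hδdef]
        · simp [Pi.add_apply, Pi.single_eq_of_ne htu, htu]
      rw [Finset.sum_congr rfl hcg, Finset.sum_add_distrib, Finset.sum_ite_eq' F u]
    have hdL : ∀ u : V, dLen f T (w + Pi.single u (a u)) p
        = min (S + (if u ∈ F then δ u else 0)) T := by
      intro u; unfold dLen; rw [hcalc u]
    have hdw : dLen f T w p = min S T := by
      unfold dLen; rw [hmap]
    have hsum_eq : ∑ u : V, (dLen f T (w + Pi.single u (a u)) p - dLen f T w p)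
        = ∑ u ∈ F, (min (S + δ u) T - min S T) := by
      rw [← Finset.sum_subset (Finset.subset_univ F)]
      · exact Finset.sum_congr rfl (fun u hu => by rw [hdL, hdw, if_pos hu])
      · intro u _ hu; rw [hdL, hdw, if_neg hu]; simp
    have hopt' : T ≤ ∑ t ∈ F, f t (x t + sStar t) := by
      have h1 := hopt p hp
      unfold dLen at h1
      have h2 := le_trans h1 (min_le_left _ _)
      rwa [hmap (fun t => f t ((x + sStar) t))] at h2
    have hcover : T ≤ S + ∑ u ∈ F, δ u := by
      have h2 : ∑ t ∈ F, f t (x t + sStar t) ≤ ∑ t ∈ F, f t (w t + a t) := by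
        apply Finset.sum_le_sum
        intro t ht
        apply hf t (Set.mem_Ici.mpr (add_nonneg (hx t) (hsStar t)))
          (Set.mem_Ici.mpr (add_nonneg (hwnn t) (hann t)))
        rw [hw' t, ha' t]
        linarith [hs t]
      have h3 : S + ∑ u ∈ F, δ u = ∑ t ∈ F, f t (w t + a t) := by
        rw [hS, ← Finset.sum_add_distrib]
        exact Finset.sum_congr rfl (fun t ht => by simp [hδdef])
      linarith
    rw [hsum_eq, hdw]
    exact core_min F δ (fun u _ => hδnn u) S T hcover
  -- step 2: sum over paths, swap sums
  have step2 : ∑ p ∈ P, (T - dLen f T w p) ≤ ∑ u : V, rGain f T P w u (a u) := by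
    calc ∑ p ∈ P, (T - dLen f T w p)
        ≤ ∑ p ∈ P, ∑ u : V, (dLen f T (w + Pi.single u (a u)) p - dLen f T w p) :=
          Finset.sum_le_sum step1
      _ = ∑ u : V, rGain f T P w u (a u) := by
          rw [Finset.sum_comm]
          exact Finset.sum_congr rfl fun u _ => rfl
  -- step 3: compare each gain to the greedy gain
  have step3 : ∀ u : V, rGain f T P w u (a u) ≤ a u * (rGain f T P w v xhat / xhat) := by
    intro u
    rcases eq_or_lt_of_le (hann u) with h0 | h0
    · have hz : rGain f T P w u (a u) = 0 := by
        simp [rGain, ← h0]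
      rw [hz, ← h0]; simp
    · have hβa : β ≤ a u := by rw [ha' u]; exact le_add_of_nonneg_left (hsStar u)
      have hg := hgreedy u (a u) hβa h0
      rw [div_le_div_iff₀ h0 hxhat] at hg
      have hx' : rGain f T P w u (a u) ≤ (a u * rGain f T P w v xhat) / xhat := by
        rw [le_div_iff₀ hxhat]; linarith
      calc rGain f T P w u (a u) ≤ (a u * rGain f T P w v xhat) / xhat := hx'
        _ = a u * (rGain f T P w v xhat / xhat) := by ring
  have hsa : ∑ u : V, a u = (∑ u : V, sStar u) + β * (Fintype.card V : ℝ) := by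
    simp only [ha']
    rw [Finset.sum_add_distrib, Finset.sum_const, Finset.card_univ, nsmul_eq_mul, mul_comm]
  calc ∑ p ∈ P, (T - dLen f T w p)
      ≤ ∑ u : V, rGain f T P w u (a u) := step2
    _ ≤ ∑ u : V, a u * (rGain f T P w v xhat / xhat) := Finset.sum_le_sum (fun u _ => step3 u)
    _ = (∑ u : V, a u) * (rGain f T P w v xhat / xhat) := (Finset.sum_mul _ _ _).symm
    _ = (((∑ u : V, sStar u) + β * (Fintype.card V : ℝ)) / xhat) * rGain f T P w v xhat := by
        rw [hsa]; ring
end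

section
/- (Theorem 4, Incremental Interdiction approximation guarantee, stated as the aggregation bound over rounds.) Let t ≥ 1 be an integer, ε ∈ (0,1), ϵ ∈ [0,1), and let C ≥ 0 (interpreted as ‖x*‖ for the optimal solution x*). Let P_1,…,P_t be pairwise disjoint nonempty finite sets of paths, all contained in a finite set F, and let Δ_1,…,Δ_t be impact vectors satisfying ‖Δ_i‖ ≤ C·(ln(|P_i|·ε^{−1}) + 1)/(1−ϵ) for each i. Then for x = Δ_1 + ⋯ + Δ_t: ‖x‖ ≤ C · t · (ln(|F|·ε^{−1}/t) + 1)/(1−ϵ). -/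
/-- Theorem 4: Incremental Interdiction approximation guarantee,
stated as the aggregation bound over rounds. -/
theorem stmt12 {V : Type*} [Fintype V]
    (t : ℕ) (ht : 1 ≤ t)
    (ε : ℝ) (hε0 : 0 < ε) (hε1 : ε < 1)
    (ϵ : ℝ) (hϵ0 : 0 ≤ ϵ) (hϵ1 : ϵ < 1)
    (C : ℝ) (hC : 0 ≤ C)
    (F : Finset (List V))
    (Ps : ℕ → Finset (List V))
    (hPne : ∀ i ∈ Finset.Icc 1 t, (Ps i).Nonempty)
    (hPsub : ∀ i ∈ Finset.Icc 1 t, Ps i ⊆ F)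
    (hdisj : ∀ i ∈ Finset.Icc 1 t, ∀ j ∈ Finset.Icc 1 t, i ≠ j → Disjoint (Ps i) (Ps j))
    (Δ : ℕ → V → ℝ)
    (hΔ : ∀ i ∈ Finset.Icc 1 t, ∀ u, 0 ≤ Δ i u)
    (hΔb : ∀ i ∈ Finset.Icc 1 t,
      ∑ u : V, Δ i u ≤ C * (Real.log (((Ps i).card : ℝ) * ε⁻¹) + 1) / (1 - ϵ)) :
    ∑ u : V, (∑ i ∈ Finset.Icc 1 t, Δ i u) ≤
      C * (t : ℝ) * (Real.log ((F.card : ℝ) * ε⁻¹ / (t : ℝ)) + 1) / (1 - ϵ) := by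
  classical
  have ht0 : (0:ℝ) < (t:ℝ) := by exact_mod_cast ht
  have hεinv : (0:ℝ) < ε⁻¹ := inv_pos.mpr hε0
  set a : ℕ → ℝ := fun i => ((Ps i).card : ℝ) * ε⁻¹ with ha
  have hapos : ∀ i ∈ Finset.Icc 1 t, 0 < a i := by
    intro i hi
    have : 0 < (Ps i).card := Finset.card_pos.mpr (hPne i hi)
    have : (0:ℝ) < ((Ps i).card : ℝ) := by exact_mod_cast this
    exact mul_pos this hεinv
  -- sum of cards ≤ |F|
  have hcard : ∑ i ∈ Finset.Icc 1 t, (Ps i).card ≤ F.card := by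
    have hb : ((Finset.Icc 1 t).biUnion Ps).card = ∑ i ∈ Finset.Icc 1 t, (Ps i).card :=
      Finset.card_biUnion (fun i hi j hj hij => hdisj i hi j hj hij)
    have hsub : (Finset.Icc 1 t).biUnion Ps ⊆ F := by
      intro x hx
      rcases Finset.mem_biUnion.mp hx with ⟨i, hi, hxi⟩
      exact hPsub i hi hxi
    calc ∑ i ∈ Finset.Icc 1 t, (Ps i).card = _ := hb.symm
      _ ≤ F.card := Finset.card_le_card hsub
  set S : ℝ := ∑ i ∈ Finset.Icc 1 t, a i with hS
  have hScard : S = (∑ i ∈ Finset.Icc 1 t, ((Ps i).card : ℝ)) * ε⁻¹ := by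
    rw [hS, Finset.sum_mul]
  have hSle : S ≤ (F.card : ℝ) * ε⁻¹ := by
    rw [hScard]
    apply mul_le_mul_of_nonneg_right _ hεinv.le
    exact_mod_cast hcard
  have hSpos : 0 < S := by
    rw [hS]
    apply Finset.sum_pos hapos
    exact ⟨1, Finset.mem_Icc.mpr ⟨le_refl 1, ht⟩⟩
  set m : ℝ := S / t with hm
  have hmpos : 0 < m := div_pos hSpos ht0
  -- tangent line: log (a i) ≤ a i / m - 1 + log m
  have hlog : ∀ i ∈ Finset.Icc 1 t, Real.log (a i) ≤ a i / m - 1 + Real.log m := by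
    intro i hi
    have h1 : Real.log (a i / m) ≤ a i / m - 1 :=
      Real.log_le_sub_one_of_pos (div_pos (hapos i hi) hmpos)
    have h2 : Real.log (a i / m) = Real.log (a i) - Real.log m :=
      Real.log_div (hapos i hi).ne' hmpos.ne'
    linarith [h1, h2.symm.le]
  have hsumlog : ∑ i ∈ Finset.Icc 1 t, Real.log (a i) ≤ (t:ℝ) * Real.log m := by
    have := Finset.sum_le_sum hlog
    have hsum : ∑ i ∈ Finset.Icc 1 t, (a i / m - 1 + Real.log m)
        = S / m - t + t * Real.log m := by
      rw [Finset.sum_add_distrib, Finset.sum_sub_distrib, ← Finset.sum_div, ← hS,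
        Finset.sum_const, Finset.sum_const, Nat.card_Icc, Nat.add_sub_cancel,
        nsmul_eq_mul, nsmul_eq_mul, mul_one]
    have hSm : S / m = (t:ℝ) := by
      rw [hm, div_div_eq_mul_div, mul_comm, mul_div_assoc, div_self hSpos.ne', mul_one]
    rw [hsum, hSm] at this
    linarith
  have hmle : Real.log m ≤ Real.log ((F.card : ℝ) * ε⁻¹ / (t:ℝ)) := by
    apply Real.log_le_log hmpos
    rw [hm]
    exact div_le_div_of_nonneg_right hSle ht0.le
  -- main chain
  have key : ∑ i ∈ Finset.Icc 1 t, (Real.log (a i) + 1)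
      ≤ (t:ℝ) * (Real.log ((F.card : ℝ) * ε⁻¹ / (t:ℝ)) + 1) := by
    rw [Finset.sum_add_distrib]
    simp only [Finset.sum_const, Nat.card_Icc, Nat.add_sub_cancel, nsmul_eq_mul, mul_one]
    have h1 : (t:ℝ) * Real.log m ≤ (t:ℝ) * Real.log ((F.card : ℝ) * ε⁻¹ / (t:ℝ)) :=
      mul_le_mul_of_nonneg_left hmle ht0.le
    have h2 : (t:ℝ) * (Real.log ((F.card : ℝ) * ε⁻¹ / (t:ℝ)) + 1)
        = (t:ℝ) * Real.log ((F.card : ℝ) * ε⁻¹ / (t:ℝ)) + t := by ring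
    linarith
  rw [Finset.sum_comm]
  calc ∑ i ∈ Finset.Icc 1 t, ∑ u : V, Δ i u
      ≤ ∑ i ∈ Finset.Icc 1 t, C * (Real.log (a i) + 1) / (1 - ϵ) :=
        Finset.sum_le_sum hΔb
    _ = (C / (1 - ϵ)) * ∑ i ∈ Finset.Icc 1 t, (Real.log (a i) + 1) := by
        rw [Finset.mul_sum]; apply Finset.sum_congr rfl; intro i _; ring
    _ ≤ (C / (1 - ϵ)) * ((t:ℝ) * (Real.log ((F.card : ℝ) * ε⁻¹ / (t:ℝ)) + 1)) := by
        apply mul_le_mul_of_nonneg_left key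
        exact div_nonneg hC (by linarith)
    _ = C * (t : ℝ) * (Real.log ((F.card : ℝ) * ε⁻¹ / (t : ℝ)) + 1) / (1 - ϵ) := by ring
end
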